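/- Let W be an N×N weight matrix on ℝ satisfying W(x) = W(−x) for almost every x, with monic orthogonal polynomials {H_n}_{n≥0}, and let V(y) = y^{−1/2} W(√y) be the associated weight matrix on (0,∞) with monic orthogonal polynomials {L_n}_{n≥0}. Let A₁ and A₀ be constant N×N matrices such that for every n ≥ 0 there is a constant matrix Λ_n with H_n''(x) + x·H_n'(x)·A₁ + H_n(x)·A₀ = Λ_n H_n(x) as matrix polynomials. Then for every n ≥ 0, 4y·L_n''(y) + L_n'(y)·(2A₁ y + 2I) + L_n(y)·A₀ = Λ_{2n} L_n(y) as matrix polynomials in y, where I is the N×N identity matrix. -/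

import Mathlib

open MeasureTheory Polynomial Set Matrix
open scoped ComplexOrder

noncomputable section

/-- Matrix polynomials: `N × N` matrices with entries in `ℂ[X]`. -/
abbrev MatPoly (N : ℕ) := Matrix (Fin N) (Fin N) (Polynomial ℂ)

/-- Evaluation of a matrix polynomial at a real point. -/
def evalM {N : ℕ} (P : MatPoly N) (x : ℝ) : Matrix (Fin N) (Fin N) ℂ :=
  fun i j => (P i j).eval (x : ℂ)

/-- The `k`-th matrix coefficient of a matrix polynomial. -/
def coeffM {N : ℕ} (P : MatPoly N) (k : ℕ) : Matrix (Fin N) (Fin N) ℂ :=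
  fun i j => (P i j).coeff k

/-- Entrywise derivative of a matrix polynomial. -/
def derivM {N : ℕ} (P : MatPoly N) : MatPoly N :=
  fun i j => Polynomial.derivative (P i j)

/-- Entrywise iterated derivative. -/
def iterDerivM {N : ℕ} (k : ℕ) (P : MatPoly N) : MatPoly N :=
  fun i j => (fun q => Polynomial.derivative q)^[k] (P i j)

/-- Constant matrix polynomial. -/
def constM {N : ℕ} (A : Matrix (Fin N) (Fin N) ℂ) : MatPoly N :=
  A.map Polynomial.C

/-- Entrywise multiplication by the scalar polynomial `X`. -/
def XmulM {N : ℕ} (P : MatPoly N) : MatPoly N :=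
  fun i j => Polynomial.X * P i j

/-- Composition with the polynomial `X ^ 2` (the substitution `x ↦ x²`). -/
def compSqM {N : ℕ} (P : MatPoly N) : MatPoly N :=
  fun i j => (P i j).comp (Polynomial.X ^ 2)

/-- Composition with `-X` (the substitution `x ↦ -x`). -/
def reflectM {N : ℕ} (P : MatPoly N) : MatPoly N :=
  fun i j => (P i j).comp (-Polynomial.X)

/-- Right action of the matrix differential operator `D = ∑_{j=0}^s (d^j/dx^j) F j`
on a matrix polynomial: `(P · D)(x) = ∑_{j=0}^s P^{(j)}(x) F_j(x)`. -/
def applyOp {N : ℕ} (s : ℕ) (F : ℕ → MatPoly N) (P : MatPoly N) : MatPoly N :=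
  ∑ j ∈ Finset.range (s + 1), iterDerivM j P * F j

/-- Entrywise integral of a matrix-valued function over a set. -/
def matInt {N : ℕ} (I : Set ℝ) (f : ℝ → Matrix (Fin N) (Fin N) ℂ) :
    Matrix (Fin N) (Fin N) ℂ :=
  fun i j => ∫ x in I, f x i j

/-- The matrix inner product `⟨P, Q⟩_W = ∫_I P(x) W(x) Q(x)^* dx`. -/
def innerW {N : ℕ} (I : Set ℝ) (W : ℝ → Matrix (Fin N) (Fin N) ℂ)
    (P Q : MatPoly N) : Matrix (Fin N) (Fin N) ℂ :=
  matInt I (fun x => evalM P x * W x * (evalM Q x)ᴴ)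

/-- `W` is a weight matrix on the set `I ⊆ ℝ`: integrable on `I`, positive definite
almost everywhere on `I`, and with all moments finite. -/
structure IsWeight {N : ℕ} (I : Set ℝ) (W : ℝ → Matrix (Fin N) (Fin N) ℂ) : Prop where
  integrable : ∀ i j, IntegrableOn (fun x => W x i j) I
  posdef : ∀ᵐ x ∂(volume.restrict I), (W x).PosDef
  moments : ∀ (n : ℕ) (i j), IntegrableOn (fun (x : ℝ) => (x : ℂ) ^ n * W x i j) I

/-- `P` is monic of degree exactly `n` (leading coefficient the identity matrix). -/
def IsMonicDeg {N : ℕ} (P : MatPoly N) (n : ℕ) : Prop :=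
  coeffM P n = 1 ∧ ∀ k, n < k → coeffM P k = 0

/-- `P` is the sequence of monic orthogonal polynomials of the weight `W` on `I`. -/
def MonicOPS {N : ℕ} (I : Set ℝ) (W : ℝ → Matrix (Fin N) (Fin N) ℂ)
    (P : ℕ → MatPoly N) : Prop :=
  (∀ n, IsMonicDeg (P n) n) ∧ ∀ n m, n ≠ m → innerW I W (P n) (P m) = 0

/-- A (not necessarily monic) sequence of orthogonal polynomials for `W` on `I`:
degree `n` with invertible leading coefficient, pairwise orthogonal. -/
def IsOPS {N : ℕ} (I : Set ℝ) (W : ℝ → Matrix (Fin N) (Fin N) ℂ)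
    (Q : ℕ → MatPoly N) : Prop :=
  (∀ n, IsUnit (coeffM (Q n) n) ∧ ∀ k, n < k → coeffM (Q n) k = 0) ∧
  ∀ n m, n ≠ m → innerW I W (Q n) (Q m) = 0

/-- The Laguerre-type weight `V(y) = y^{-1/2} W(√y)` on `(0,∞)`. -/
def VWeight {N : ℕ} (W : ℝ → Matrix (Fin N) (Fin N) ℂ) :
    ℝ → Matrix (Fin N) (Fin N) ℂ :=
  fun y => (Real.sqrt y)⁻¹ • W (Real.sqrt y)

/-- The Laguerre-type weight `U(y) = y^{1/2} W(√y)` on `(0,∞)`. -/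
def UWeight {N : ℕ} (W : ℝ → Matrix (Fin N) (Fin N) ℂ) :
    ℝ → Matrix (Fin N) (Fin N) ℂ :=
  fun y => Real.sqrt y • W (Real.sqrt y)

/-- `p` is the sequence of monic scalar orthogonal polynomials of the scalar
weight `w` on `I`. -/
def ScalarMonicOPS (I : Set ℝ) (w : ℝ → ℝ) (p : ℕ → Polynomial ℝ) : Prop :=
  (∀ n, (p n).Monic ∧ (p n).natDegree = n) ∧
  ∀ n m, n ≠ m → ∫ x in I, (p n).eval x * (p m).eval x * w x = 0

/-!
Since `W` is even, folding `ℝ` onto `(0, ∞)` and substituting `y = x²` gives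
`⟨P(x²), Q(x²)⟩_W = ⟨P, Q⟩_V`. Hence `L_n(x²)` is monic of degree `2n`, and it is
orthogonal to every `H_m` with `m < 2n`: pairing against `H_m` only sees its even part
`H_m(x) + H_m(-x)`, a polynomial in `x²` of degree `< n`, i.e. a combination of
`L_0, …, L_{n-1}`. Uniqueness of monic orthogonal polynomials gives `H_{2n}(x) = L_n(x²)`,
and substituting `x² = y` in the differential equation of `H_{2n}` yields the one of `L_n`.
-/

section MatPolyAlgebra

variable {N : ℕ}

def DegLt (R : MatPoly N) (n : ℕ) : Prop := ∀ k, n ≤ k → coeffM R k = 0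

lemma matPoly_ext {P Q : MatPoly N} (h : ∀ k, coeffM P k = coeffM Q k) : P = Q := by
  ext i j k
  exact congrFun (congrFun (h k) i) j

lemma coeffM_add (P Q : MatPoly N) (k : ℕ) :
    coeffM (P + Q) k = coeffM P k + coeffM Q k := by
  ext i j; simp [coeffM]

lemma coeffM_sub (P Q : MatPoly N) (k : ℕ) :
    coeffM (P - Q) k = coeffM P k - coeffM Q k := by
  ext i j; simp [coeffM]

lemma coeffM_constM_mul (A : Matrix (Fin N) (Fin N) ℂ) (P : MatPoly N) (k : ℕ) :
    coeffM (constM A * P) k = A * coeffM P k := by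
  ext i j
  simp [coeffM, constM, Matrix.mul_apply]

lemma IsMonicDeg.degLt {P : MatPoly N} {m n : ℕ} (hP : IsMonicDeg P m) (h : m < n) :
    DegLt P n :=
  fun k hk => hP.2 k (by omega)

lemma IsMonicDeg.degLt_sub {P Q : MatPoly N} {n : ℕ} (hP : IsMonicDeg P n)
    (hQ : IsMonicDeg Q n) : DegLt (P - Q) n := by
  intro k hk
  rw [coeffM_sub]
  rcases hk.eq_or_lt with rfl | hlt
  · rw [hP.1, hQ.1, sub_self]
  · rw [hP.2 k hlt, hQ.2 k hlt, sub_self]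

lemma compSqM_eq_mapMatrix (P : MatPoly N) : compSqM P = (expand ℂ 2).mapMatrix P := rfl

lemma compSqM_add (P Q : MatPoly N) : compSqM (P + Q) = compSqM P + compSqM Q := by
  simp only [compSqM_eq_mapMatrix, map_add]

lemma compSqM_mul (P Q : MatPoly N) : compSqM (P * Q) = compSqM P * compSqM Q := by
  simp only [compSqM_eq_mapMatrix, map_mul]

lemma compSqM_smul (c : ℂ) (P : MatPoly N) : compSqM (c • P) = c • compSqM P := by
  simp only [compSqM_eq_mapMatrix, map_smul]

lemma compSqM_sum {ι : Type*} (s : Finset ι) (P : ι → MatPoly N) :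
    compSqM (∑ a ∈ s, P a) = ∑ a ∈ s, compSqM (P a) := by
  simp only [compSqM_eq_mapMatrix, map_sum]

lemma compSqM_constM (A : Matrix (Fin N) (Fin N) ℂ) : compSqM (constM A) = constM A := by
  funext i j; simp [compSqM, constM]

lemma compSqM_XmulM (P : MatPoly N) : compSqM (XmulM P) = XmulM (XmulM (compSqM P)) := by
  funext i j; simp only [compSqM, XmulM, mul_comp, X_comp]; ring

lemma compSqM_injective : Function.Injective (compSqM (N := N)) := fun _ _ h =>
  funext₂ fun i j => expand_injective two_pos (congrFun₂ h i j)

lemma coeffM_compSqM (P : MatPoly N) (k : ℕ) :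
    coeffM (compSqM P) k = if 2 ∣ k then coeffM P (k / 2) else 0 := by
  ext i j
  simp only [coeffM, compSqM, ← expand_eq_comp_X_pow, coeff_expand two_pos]
  split_ifs <;> rfl

lemma IsMonicDeg.compSqM {P : MatPoly N} {n : ℕ} (hP : IsMonicDeg P n) :
    IsMonicDeg (compSqM P) (2 * n) := by
  refine ⟨?_, fun k hk => ?_⟩
  · rw [coeffM_compSqM, if_pos (dvd_mul_right 2 n), Nat.mul_div_cancel_left n two_pos, hP.1]
  · rw [coeffM_compSqM]
    split_ifs with h2
    · exact hP.2 _ (by omega)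
    · rfl

lemma derivM_compSqM (P : MatPoly N) :
    derivM (compSqM P) = (2 : ℂ) • XmulM (compSqM (derivM P)) := by
  funext i j
  simp only [derivM, compSqM, XmulM, Matrix.smul_apply, derivative_comp, derivative_X_pow,
    smul_eq_C_mul]
  push_cast
  ring

lemma derivM_smul (c : ℂ) (P : MatPoly N) : derivM (c • P) = c • derivM P := by
  funext i j; simp [derivM]

lemma derivM_XmulM (P : MatPoly N) : derivM (XmulM P) = P + XmulM (derivM P) := by
  funext i j; simp [derivM, XmulM]

lemma XmulM_smul (c : ℂ) (P : MatPoly N) : XmulM (c • P) = c • XmulM P := by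
  funext i j; simp [XmulM]

lemma constM_smul (c : ℂ) (A : Matrix (Fin N) (Fin N) ℂ) :
    constM (c • A) = c • constM A := by
  funext i j; simp [constM, smul_eq_C_mul]

lemma diffEq_of_diffEq_compSqM (L : MatPoly N) (A1 A0 Λ : Matrix (Fin N) (Fin N) ℂ)
    (h : derivM (derivM (compSqM L)) + XmulM (derivM (compSqM L)) * constM A1
          + compSqM L * constM A0 = constM Λ * compSqM L) :
    (4 : ℂ) • XmulM (derivM (derivM L)) + XmulM (derivM L) * constM ((2 : ℂ) • A1)
      + (2 : ℂ) • derivM L + L * constM A0 = constM Λ * L := by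
  apply compSqM_injective
  rw [compSqM_mul, compSqM_constM, ← h]
  simp only [compSqM_add, compSqM_smul, compSqM_mul, compSqM_constM, compSqM_XmulM,
    derivM_compSqM, derivM_smul, derivM_XmulM, XmulM_smul, constM_smul,
    Matrix.mul_smul, Matrix.smul_mul, smul_smul, smul_add]
  module

end MatPolyAlgebra

section Reflection

variable {N : ℕ}

lemma coeffM_reflectM (P : MatPoly N) (k : ℕ) :
    coeffM (reflectM P) k = (-1 : ℂ) ^ k • coeffM P k := by
  funext i j
  have hX : (-X : ℂ[X]) = C (-1) * X := by simp
  rw [coeffM, reflectM, hX, comp_C_mul_X_coeff, mul_comm]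
  rfl

lemma reflectM_compSqM (P : MatPoly N) : reflectM (compSqM P) = compSqM P := by
  funext i j
  simp [reflectM, compSqM, comp_assoc]

lemma coeffM_add_reflectM_of_odd (P : MatPoly N) {k : ℕ} (hk : Odd k) :
    coeffM (P + reflectM P) k = 0 := by
  rw [coeffM_add, coeffM_reflectM, hk.neg_one_pow, neg_one_smul, add_neg_cancel]

lemma exists_compSqM_eq_add_reflectM {P : MatPoly N} {n : ℕ} (hP : DegLt P (2 * n)) :
    ∃ G : MatPoly N, DegLt G n ∧ compSqM G = P + reflectM P := by
  have hcoeff : ∀ k,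
      coeffM ((P + reflectM P).map (contract 2)) k = coeffM (P + reflectM P) (k * 2) :=
    fun k => funext₂ fun i j => coeff_contract two_ne_zero _ k
  refine ⟨(P + reflectM P).map (contract 2), fun k hk => ?_, matPoly_ext fun k => ?_⟩
  · rw [hcoeff, coeffM_add, coeffM_reflectM, hP _ (by omega), smul_zero, add_zero]
  · rw [coeffM_compSqM]
    split_ifs with hk
    · rw [hcoeff, Nat.div_mul_cancel hk]
    · exact (coeffM_add_reflectM_of_odd P (Nat.odd_iff.2 (by omega))).symm

end Reflection

lemma exists_eq_sum_constM_mul {N : ℕ} {P : ℕ → MatPoly N} (hP : ∀ n, IsMonicDeg (P n) n) :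
    ∀ {m : ℕ} {R : MatPoly N}, DegLt R m →
      ∃ C : ℕ → Matrix (Fin N) (Fin N) ℂ,
        R = ∑ j ∈ Finset.range m, constM (C j) * P j := by
  intro m
  induction m with
  | zero =>
    intro R hR
    refine ⟨0, matPoly_ext fun k => ?_⟩
    rw [hR k k.zero_le, Finset.sum_range_zero]
    funext i j
    simp [coeffM]
  | succ m ih =>
    intro R hR
    have hlower : DegLt (R - constM (coeffM R m) * P m) m := by
      intro k hk
      rw [coeffM_sub, coeffM_constM_mul]
      rcases hk.eq_or_lt with rfl | hlt
      · rw [(hP m).1, mul_one, sub_self]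
      · rw [(hP m).2 k hlt, hR k hlt, mul_zero, sub_self]
    obtain ⟨C, hC⟩ := ih hlower
    refine ⟨Function.update C m (coeffM R m), ?_⟩
    rw [Finset.sum_range_succ, Function.update_self,
      Finset.sum_congr rfl fun j hj => by rw [Function.update_of_ne (Finset.mem_range.1 hj).ne],
      ← hC, sub_add_cancel]

lemma Matrix.mul_mul_conjTranspose_apply_self {n : Type*} [Fintype n] (B A : Matrix n n ℂ)
    (i : n) :
    (B * A * Bᴴ) i i = B i ⬝ᵥ A *ᵥ star (B i) := by
  rw [dotProduct_mulVec, Matrix.mul_apply']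
  rfl

lemma Matrix.PosDef.eq_zero_of_diag_mul_mul_conjTranspose {n : Type*} [Fintype n]
    {A B : Matrix n n ℂ} (hA : A.PosDef) (h : ∀ i, (B * A * Bᴴ) i i = 0) : B = 0 := by
  ext i l
  by_contra hne
  have hrow : star (B i) ≠ 0 := fun h0 => hne (by simpa using congrFun h0 l)
  have hpos := hA.dotProduct_mulVec_pos hrow
  rw [star_star, ← Matrix.mul_mul_conjTranspose_apply_self, h i] at hpos
  exact lt_irrefl 0 hpos

lemma MeasureTheory.ae_eq_zero_of_integral_eq_zero_of_nonneg {α : Type*} [MeasurableSpace α]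
    {μ : Measure α} {f : α → ℂ} (hf : 0 ≤ᵐ[μ] f) (hfi : Integrable f μ)
    (h : ∫ x, f x ∂μ = 0) :
    f =ᵐ[μ] 0 := by
  have hre : (fun x => (f x).re) =ᵐ[μ] 0 := by
    refine (integral_eq_zero_iff_of_nonneg_ae (hf.mono fun x hx => ?_) hfi.re).1 ?_
    · exact (Complex.le_def.1 hx).1
    · rw [integral_re hfi, h, map_zero]
  filter_upwards [hf, hre] with x hx hxre
  exact Complex.ext hxre (Complex.le_def.1 hx).2.symm

lemma Polynomial.eq_zero_of_ae_eval_eq_zero {I : Set ℝ} (hI : volume I ≠ 0) {p : ℂ[X]}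
    (h : ∀ᵐ x : ℝ ∂volume.restrict I, p.eval (x : ℂ) = 0) : p = 0 := by
  by_contra hp
  have hroots : {x : ℝ | p.eval (x : ℂ) = 0}.Finite :=
    (p.finite_setOfPred_isRoot hp).preimage Complex.ofReal_injective.injOn
  have hfalse : ∀ᵐ x ∂volume.restrict I, False := by
    filter_upwards [h, ae_restrict_of_ae
      (measure_eq_zero_iff_ae_notMem.1 (hroots.measure_zero volume))]
      with x hx hx' using hx' hx
  exact hI (Measure.restrict_eq_zero.1 (ae_eq_bot.1 (Filter.eventually_false_iff_eq_bot.1 hfalse)))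

section InnerProduct

variable {N : ℕ} {I : Set ℝ} {W : ℝ → Matrix (Fin N) (Fin N) ℂ}

lemma evalM_zero (x : ℝ) : evalM (0 : MatPoly N) x = 0 := by
  funext i j; simp [evalM]

lemma evalM_add (P Q : MatPoly N) (x : ℝ) : evalM (P + Q) x = evalM P x + evalM Q x := by
  funext i j; simp [evalM]

lemma evalM_sub (P Q : MatPoly N) (x : ℝ) : evalM (P - Q) x = evalM P x - evalM Q x := by
  funext i j; simp [evalM]

lemma evalM_mul (P Q : MatPoly N) (x : ℝ) : evalM (P * Q) x = evalM P x * evalM Q x := by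
  funext i j; simp [evalM, Matrix.mul_apply, eval_finsetSum]

lemma evalM_constM (A : Matrix (Fin N) (Fin N) ℂ) (x : ℝ) : evalM (constM A) x = A := by
  funext i j; simp [evalM, constM]

lemma star_eval_ofReal (p : ℂ[X]) (x : ℝ) :
    star (p.eval (x : ℂ)) = (p.map (starRingEnd ℂ)).eval (x : ℂ) := by
  rw [eval_map, ← Complex.conj_ofReal x, eval₂_at_apply, Complex.conj_ofReal]
  rfl

lemma innerW_apply (P Q : MatPoly N) (i j : Fin N) :
    innerW I W P Q i j = ∫ x in I, (evalM P x * W x * (evalM Q x)ᴴ) i j := rfl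

lemma IsWeight.integrableOn_eval_mul (hW : IsWeight I W) (p : ℂ[X]) (i j : Fin N) :
    IntegrableOn (fun x : ℝ => p.eval (x : ℂ) * W x i j) I := by
  simp only [eval_eq_sum_range, Finset.sum_mul, mul_assoc]
  exact integrable_finsetSum _ fun m _ => (hW.moments m i j).const_mul (p.coeff m)

lemma IsWeight.integrableOn_innerW_integrand (hW : IsWeight I W) (P Q : MatPoly N) (i j : Fin N) :
    IntegrableOn (fun x : ℝ => (evalM P x * W x * (evalM Q x)ᴴ) i j) I := by
  have hexpand : ∀ x : ℝ, (evalM P x * W x * (evalM Q x)ᴴ) i j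
      = ∑ l, ∑ k, (P i k * (Q j l).map (starRingEnd ℂ)).eval (x : ℂ) * W x k l := by
    intro x
    simp only [Matrix.mul_apply, Matrix.conjTranspose_apply, Finset.sum_mul, eval_mul, evalM,
      star_eval_ofReal]
    exact Finset.sum_congr rfl fun l _ => Finset.sum_congr rfl fun k _ => by ring
  simp only [hexpand]
  exact integrable_finsetSum _ fun l _ =>
    integrable_finsetSum _ fun k _ => hW.integrableOn_eval_mul _ k l

lemma IsWeight.innerW_sub_left (hW : IsWeight I W) (P P' Q : MatPoly N) :
    innerW I W (P - P') Q = innerW I W P Q - innerW I W P' Q := by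
  funext i j
  simp only [Matrix.sub_apply, innerW_apply, evalM_sub, Matrix.sub_mul]
  exact integral_sub (hW.integrableOn_innerW_integrand P Q i j)
    (hW.integrableOn_innerW_integrand P' Q i j)

lemma IsWeight.innerW_add_right (hW : IsWeight I W) (P Q Q' : MatPoly N) :
    innerW I W P (Q + Q') = innerW I W P Q + innerW I W P Q' := by
  funext i j
  simp only [Matrix.add_apply, innerW_apply, evalM_add, Matrix.conjTranspose_add, Matrix.mul_add]
  exact integral_add (hW.integrableOn_innerW_integrand P Q i j)
    (hW.integrableOn_innerW_integrand P Q' i j)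

lemma IsWeight.innerW_constM_mul_right (hW : IsWeight I W) (P : MatPoly N)
    (C : Matrix (Fin N) (Fin N) ℂ) (Q : MatPoly N) :
    innerW I W P (constM C * Q) = innerW I W P Q * Cᴴ := by
  funext i j
  simp only [innerW_apply, evalM_mul, evalM_constM, Matrix.conjTranspose_mul, ← Matrix.mul_assoc,
    Matrix.mul_apply (M := _ * (evalM Q _)ᴴ)]
  rw [integral_finsetSum _ fun k _ => (hW.integrableOn_innerW_integrand P Q i k).mul_const _]
  exact Finset.sum_congr rfl fun k _ => integral_mul_const _ _

lemma innerW_zero_right (P : MatPoly N) : innerW I W P 0 = 0 := by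
  funext i j
  simp [innerW_apply, evalM_zero]

lemma IsWeight.innerW_sum_constM_mul_eq_zero (hW : IsWeight I W) {P : MatPoly N}
    {Q : ℕ → MatPoly N} (C : ℕ → Matrix (Fin N) (Fin N) ℂ) {s : Finset ℕ}
    (hQ : ∀ j ∈ s, innerW I W P (Q j) = 0) :
    innerW I W P (∑ j ∈ s, constM (C j) * Q j) = 0 := by
  induction s using Finset.induction_on with
  | empty => exact innerW_zero_right P
  | insert j s hj ih =>
    rw [Finset.sum_insert hj, hW.innerW_add_right, hW.innerW_constM_mul_right,
      hQ j (Finset.mem_insert_self j s), Matrix.zero_mul, zero_add,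
      ih fun l hl => hQ l (Finset.mem_insert_of_mem hl)]

end InnerProduct

section Definiteness

variable {N : ℕ} {I : Set ℝ} {W : ℝ → Matrix (Fin N) (Fin N) ℂ}

lemma IsWeight.eq_zero_of_innerW_self_eq_zero (hW : IsWeight I W) (hI : volume I ≠ 0)
    {R : MatPoly N} (h : innerW I W R R = 0) : R = 0 := by
  have hdiag : ∀ i, ∀ᵐ x ∂volume.restrict I, (evalM R x * W x * (evalM R x)ᴴ) i i = 0 :=
    fun i => ae_eq_zero_of_integral_eq_zero_of_nonneg
      (hW.posdef.mono fun x hx => (hx.posSemidef.mul_mul_conjTranspose_same _).diag_nonneg)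
      (hW.integrableOn_innerW_integrand R R i i) (congrFun₂ h i i)
  have heval : ∀ᵐ x ∂volume.restrict I, evalM R x = 0 := by
    filter_upwards [hW.posdef, ae_all_iff.2 hdiag] with x hx hx'
    exact hx.eq_zero_of_diag_mul_mul_conjTranspose hx'
  funext i j
  exact eq_zero_of_ae_eval_eq_zero hI (heval.mono fun x hx => congrFun₂ hx i j)

lemma MonicOPS.eq_of_innerW_eq_zero {H : ℕ → MatPoly N} (hH : MonicOPS I W H)
    (hW : IsWeight I W) (hI : volume I ≠ 0) {n : ℕ} {M : MatPoly N} (hM : IsMonicDeg M n)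
    (horth : ∀ m < n, innerW I W M (H m) = 0) : M = H n := by
  obtain ⟨C, hC⟩ := exists_eq_sum_constM_mul hH.1 (hM.degLt_sub (hH.1 n))
  have hself : innerW I W (M - H n) (M - H n) = 0 := by
    rw [hW.innerW_sub_left, hC,
      hW.innerW_sum_constM_mul_eq_zero C fun m hm => horth m (Finset.mem_range.1 hm),
      hW.innerW_sum_constM_mul_eq_zero C fun m hm => hH.2 n m (Finset.mem_range.1 hm).ne',
      sub_zero]
  exact sub_eq_zero.1 (hW.eq_zero_of_innerW_self_eq_zero hI hself)

end Definiteness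

lemma MeasureTheory.integral_eq_two_nsmul_integral_Ioi {E : Type*} [NormedAddCommGroup E]
    [NormedSpace ℝ E] {f : ℝ → E} (hf : Integrable f) (heven : ∀ᵐ x, f (-x) = f x) :
    ∫ x, f x = 2 • ∫ x in Ioi 0, f x := by
  have hIic : ∫ x in Iic 0, f x = ∫ x in Ioi 0, f x := by
    rw [← neg_zero, ← integral_comp_neg_Iic, neg_zero]
    exact integral_congr_ae (ae_restrict_of_ae (heven.mono fun x hx => hx.symm))
  rw [← intervalIntegral.integral_Iic_add_Ioi hf.integrableOn hf.integrableOn, hIic, two_nsmul]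

lemma MeasureTheory.integral_Ioi_eq_integral_Ioi_sq {E : Type*} [NormedAddCommGroup E]
    [NormedSpace ℝ E] (g : ℝ → E) :
    ∫ y in Ioi 0, g y = ∫ x in Ioi 0, (2 * x) • g (x ^ 2) := by
  rw [← integral_comp_rpow_Ioi_of_pos two_pos]
  refine setIntegral_congr_fun measurableSet_Ioi fun x _ => ?_
  norm_num

section Symmetry

variable {N : ℕ} {W : ℝ → Matrix (Fin N) (Fin N) ℂ}

lemma evalM_reflectM (P : MatPoly N) (x : ℝ) : evalM (reflectM P) x = evalM P (-x) := by
  funext i j; simp [evalM, reflectM, eval_comp]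

lemma evalM_compSqM (P : MatPoly N) (x : ℝ) : evalM (compSqM P) x = evalM P (x ^ 2) := by
  funext i j; simp [evalM, compSqM, eval_comp]

lemma innerW_reflectM (hsymm : ∀ᵐ x : ℝ, W x = W (-x)) (P Q : MatPoly N) :
    innerW univ W (reflectM P) (reflectM Q) = innerW univ W P Q := by
  funext i j
  rw [innerW_apply, innerW_apply, Measure.restrict_univ,
    ← integral_neg_eq_self (fun x => (evalM P x * W x * (evalM Q x)ᴴ) i j)]
  refine integral_congr_ae (hsymm.mono fun x hx => ?_)
  dsimp only
  rw [evalM_reflectM, evalM_reflectM, hx]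

lemma IsWeight.innerW_univ_eq_two_smul_Ioi (hW : IsWeight univ W)
    (hsymm : ∀ᵐ x : ℝ, W x = W (-x)) {P Q : MatPoly N} (hP : reflectM P = P)
    (hQ : reflectM Q = Q) :
    innerW univ W P Q = (2 : ℂ) • innerW (Ioi 0) W P Q := by
  funext i j
  have hint := hW.integrableOn_innerW_integrand P Q i j
  rw [IntegrableOn, Measure.restrict_univ] at hint
  rw [Matrix.smul_apply, innerW_apply, innerW_apply, Measure.restrict_univ,
    integral_eq_two_nsmul_integral_Ioi hint, two_nsmul, two_smul]
  filter_upwards [hsymm] with x hx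
  rw [← hx, ← evalM_reflectM, ← evalM_reflectM, hP, hQ]

lemma innerW_VWeight (P Q : MatPoly N) :
    innerW (Ioi 0) (VWeight W) P Q = (2 : ℂ) • innerW (Ioi 0) W (compSqM P) (compSqM Q) := by
  funext i j
  rw [Matrix.smul_apply, innerW_apply, innerW_apply, integral_Ioi_eq_integral_Ioi_sq,
    ← integral_smul]
  refine setIntegral_congr_fun measurableSet_Ioi fun x (hx : 0 < x) => ?_
  rw [VWeight, Real.sqrt_sq hx.le, evalM_compSqM, evalM_compSqM, Matrix.mul_smul,
    Matrix.smul_mul, Matrix.smul_apply, smul_smul, ← Complex.coe_smul]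
  congr 1
  push_cast
  field_simp

lemma IsWeight.innerW_compSqM (hW : IsWeight univ W) (hsymm : ∀ᵐ x : ℝ, W x = W (-x))
    (P Q : MatPoly N) :
    innerW univ W (compSqM P) (compSqM Q) = innerW (Ioi 0) (VWeight W) P Q := by
  rw [hW.innerW_univ_eq_two_smul_Ioi hsymm (reflectM_compSqM P) (reflectM_compSqM Q),
    innerW_VWeight]

end Symmetry

lemma MonicOPS.eq_compSqM {N : ℕ} {W : ℝ → Matrix (Fin N) (Fin N) ℂ} (hW : IsWeight univ W)
    (hsymm : ∀ᵐ x : ℝ, W x = W (-x)) {H L : ℕ → MatPoly N} (hH : MonicOPS univ W H)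
    (hL : MonicOPS (Ioi 0) (VWeight W) L) (n : ℕ) :
    H (2 * n) = compSqM (L n) := by
  refine (hH.eq_of_innerW_eq_zero hW (by simp) (hL.1 n).compSqM fun m hm => ?_).symm
  set M := compSqM (L n)
  -- `⟨M, H_m⟩` only sees the even part of `H_m`, a polynomial in `x²` of degree `< n`.
  have hreflect : innerW univ W M (reflectM (H m)) = innerW univ W M (H m) := by
    calc innerW univ W M (reflectM (H m))
        = innerW univ W (reflectM M) (reflectM (H m)) := by rw [reflectM_compSqM]
      _ = innerW univ W M (H m) := innerW_reflectM hsymm _ _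
  obtain ⟨G, hGdeg, hG⟩ := exists_compSqM_eq_add_reflectM ((hH.1 m).degLt hm)
  obtain ⟨C, rfl⟩ := exists_eq_sum_constM_mul hL.1 hGdeg
  have heven : innerW univ W M (H m + reflectM (H m)) = 0 := by
    simp only [← hG, compSqM_sum, compSqM_mul, compSqM_constM]
    refine hW.innerW_sum_constM_mul_eq_zero C fun j hj => ?_
    rw [hW.innerW_compSqM hsymm]
    exact hL.2 n j (Finset.mem_range.1 hj).ne'
  rw [hW.innerW_add_right, hreflect, ← two_smul ℂ] at heven
  exact (smul_eq_zero.1 heven).resolve_left two_ne_zero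

/-- If `W(x) = W(-x)` a.e., `H` are the monic orthogonal polynomials
of `W`, `L` those of `V(y) = y^{-1/2} W(√y)` and
`H_n'' + x H_n' A₁ + H_n A₀ = Λ_n H_n` for all `n`, then
`4y L_n'' + L_n'(2A₁y + 2I) + L_n A₀ = Λ_{2n} L_n` for all `n`. -/
theorem stmt10 {N : ℕ} (W : ℝ → Matrix (Fin N) (Fin N) ℂ)
    (hW : IsWeight Set.univ W)
    (hsymm : ∀ᵐ x : ℝ, W x = W (-x))
    (H : ℕ → MatPoly N) (hH : MonicOPS Set.univ W H)
    (L : ℕ → MatPoly N) (hL : MonicOPS (Set.Ioi 0) (VWeight W) L)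
    (A1 A0 : Matrix (Fin N) (Fin N) ℂ) (Λ : ℕ → Matrix (Fin N) (Fin N) ℂ)
    (hD : ∀ n : ℕ,
      derivM (derivM (H n)) + XmulM (derivM (H n)) * constM A1 + H n * constM A0
        = constM (Λ n) * H n) :
    ∀ n : ℕ,
      (4 : ℂ) • XmulM (derivM (derivM (L n)))
        + XmulM (derivM (L n)) * constM ((2 : ℂ) • A1)
        + (2 : ℂ) • derivM (L n)
        + L n * constM A0
      = constM (Λ (2 * n)) * L n := by
  intro n
  have hD2n := hD (2 * n)
  rw [hH.eq_compSqM hW hsymm hL n] at hD2n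
  exact diffEq_of_diffEq_compSqM (L n) A1 A0 (Λ (2 * n)) hD2n
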